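/- arXiv:1301.6865 — 8 statements merged into one kernel-verified Lean document; each statement's English description precedes it below -/
import Mathlib

section
/- If H is an SS-quasinormal subgroup of a finite group G, then H is S-semipermutable in G; that is, H permutes with every Sylow p-subgroup P of G for every prime p not dividing |H|. -/
open scoped Pointwise

/-- `H` is S-quasinormal in `G` if it permutes with every Sylow subgroup of `G`. -/
def SQuasinormal (G : Type*) [Group G] (H : Subgroup G) : Prop :=
  ∀ (p : ℕ), p.Prime → ∀ P : Sylow p G,
    (H : Set G) * ((P : Subgroup G) : Set G) = ((P : Subgroup G) : Set G) * (H : Set G)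

/-- `H` is SS-quasinormal in `G` if it has a supplement `B` (`G = HB`) such that `H`
permutes with every Sylow subgroup of `B`. -/
def SSQuasinormal (G : Type*) [Group G] (H : Subgroup G) : Prop :=
  ∃ B : Subgroup G, (H : Set G) * (B : Set G) = Set.univ ∧
    ∀ (q : ℕ), q.Prime → ∀ Q : Sylow q B,
      (H : Set G) * ((((Q : Subgroup B).map B.subtype) : Subgroup G) : Set G) =
        ((((Q : Subgroup B).map B.subtype) : Subgroup G) : Set G) * (H : Set G)

/-!
Since `G = HB`, the group `H` acts transitively on `G ⧸ B`, so `|G : B|` divides `|H|`; for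
`p ∤ |H|` it follows that `B` contains a Sylow `p`-subgroup `R` of `G`. Every Sylow
`p`-subgroup of `G` is then `(hb) • R` with `h ∈ H`, `b ∈ B`: the `h`-conjugate of the Sylow
`p`-subgroup `b • R` of `B`, which permutes with `H`. Conjugation by `h ∈ H` fixes `H`, so it
preserves this permutability.
-/

namespace Subgroup

variable {G : Type*} [Group G]

theorem index_dvd_card_of_coe_mul_eq_univ {H B : Subgroup G} [Finite H]
    (hHB : (H : Set G) * (B : Set G) = Set.univ) : B.index ∣ Nat.card H := by
  have horbit : MulAction.orbit H ((1 : G) : G ⧸ B) = Set.univ := by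
    refine Set.eq_univ_of_forall fun x => ?_
    induction x using QuotientGroup.induction_on with | H g => ?_
    obtain ⟨h, hh, b, hb, rfl⟩ : g ∈ (H : Set G) * B := hHB ▸ Set.mem_univ g
    refine ⟨⟨h, hh⟩, ?_⟩
    show (h : G) • ((1 : G) : G ⧸ B) = ((h * b : G) : G ⧸ B)
    rw [MulAction.Quotient.smul_coe, smul_eq_mul, mul_one, QuotientGroup.eq]
    simpa using hb
  rw [index_eq_card, ← Set.ncard_univ, ← horbit, ← MulAction.index_stabilizer]
  exact index_dvd_card _

theorem coe_mul_conj_smul_comm {H K : Subgroup G} (hHK : (H : Set G) * K = K * H)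
    {h : G} (hh : h ∈ H) :
    (H : Set G) * ↑(MulAut.conj h • K) = ↑(MulAut.conj h • K) * H := by
  have hH : MulAut.conj h '' H = H := congrArg SetLike.coe (conj_smul_eq_self_of_mem hh)
  have hK : (↑(MulAut.conj h • K) : Set G) = MulAut.conj h '' K := rfl
  rw [hK, ← hH, ← Set.image_mul, hHK, Set.image_mul]

end Subgroup

namespace Sylow

variable {G : Type*} [Group G] {p : ℕ} [Fact p.Prime]

theorem exists_le_of_not_dvd_index [Finite G] {B : Subgroup G} (hB : ¬ p ∣ B.index) :
    ∃ P : Sylow p G, P ≤ B := by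
  obtain ⟨Q⟩ : Nonempty (Sylow p B) := inferInstance
  have hQ : ¬ p ∣ (Q.map B.subtype).index := by
    rw [Subgroup.index_map_subtype, (Fact.out : p.Prime).dvd_mul]
    exact not_or.mpr ⟨Q.not_dvd_index, hB⟩
  exact ⟨(Q.isPGroup'.map B.subtype).toSylow hQ, Subgroup.map_subtype_le _⟩

theorem exists_smul_eq_of_coe_mul_eq_univ {H B : Subgroup G}
    (hHB : (H : Set G) * (B : Set G) = Set.univ) [Finite (Sylow p G)]
    {R : Sylow p G} (hRB : R ≤ B) (P : Sylow p G) :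
    ∃ h ∈ H, ∃ T : Sylow p G, T ≤ B ∧ h • T = P := by
  obtain ⟨g, rfl⟩ := MulAction.exists_smul_eq G R P
  obtain ⟨h, hh, b, hb, rfl⟩ : g ∈ (H : Set G) * B := hHB ▸ Set.mem_univ g
  exact ⟨h, hh, b • R, smul_le hRB ⟨b, hb⟩, (mul_smul h b R).symm⟩

end Sylow

/-- Every SS-quasinormal subgroup of a finite group is S-semipermutable. -/
theorem ssQuasinormal_isSSemipermutable {G : Type*} [Group G] [Finite G]
    (H : Subgroup G) (hH : SSQuasinormal G H) :
    ∀ (p : ℕ), p.Prime → ¬ p ∣ Nat.card H → ∀ P : Sylow p G,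
      (H : Set G) * ((P : Subgroup G) : Set G) = ((P : Subgroup G) : Set G) * (H : Set G) := by
  intro p hp hpH P
  have : Fact p.Prime := ⟨hp⟩
  obtain ⟨B, hHB, hperm⟩ := hH
  have hpB : ¬ p ∣ B.index :=
    fun hdvd => hpH (hdvd.trans (Subgroup.index_dvd_card_of_coe_mul_eq_univ hHB))
  obtain ⟨R, hRB⟩ := Sylow.exists_le_of_not_dvd_index hpB
  obtain ⟨h, hh, T, hTB, rfl⟩ := Sylow.exists_smul_eq_of_coe_mul_eq_univ hHB hRB P
  have hHT : (H : Set G) * T = T * H := by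
    simpa [Sylow.coe_subtype, Subgroup.subgroupOf_map_subtype, hTB] using
      hperm p hp (T.subtype hTB)
  rw [Sylow.coe_subgroup_smul]
  exact Subgroup.coe_mul_conj_smul_comm hHT hh
end

section
/- If H is an S-quasinormal subgroup of a finite group G and U is a subgroup of G, then H ∩ U is S-quasinormal in U. -/
/-!
Let `Q` be a Sylow `p`-subgroup of `U` and `P ≥ Q` a Sylow `p`-subgroup of `G`. As `HP = PH`, the
set `T = PH` is a subgroup in which `H` has `p`-power index `|P : P ∩ H|`. By Dedekind's rule `H`
permutes with `S ∩ T` for every Sylow `q`-subgroup `S` of `G`, so `(S ∩ T)H` is a subgroup whose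
index over `H` is both a power of `q` and a divisor of `|T : H|`; for `q ≠ p` this forces
`S ∩ T ≤ H`. Hence in `V = U ∩ T` the index of `H ∩ U` is a power of `p`, while the index of `Q`
is prime to `p`, and two subgroups of coprime indices multiply to the whole group:
`Q(H ∩ U) = V = (H ∩ U)Q`.
-/

open scoped Pointwise

namespace Subgroup

variable {G : Type*} [Group G]

theorem coe_sup_of_mul_comm {A B : Subgroup G} (h : (A : Set G) * B = B * A) :
    ((A ⊔ B : Subgroup G) : Set G) = A * B := by
  rw [sup_eq_closure_mul]
  refine Set.Subset.antisymm (fun x hx => ?_) subset_closure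
  induction hx using closure_induction with
  | mem _ hx => exact hx
  | one => exact ⟨1, one_mem _, 1, one_mem _, mul_one 1⟩
  | mul x y _ _ hx hy =>
    have hmul : (A : Set G) * B * (A * B) = A * B := by
      rw [mul_assoc, ← mul_assoc (B : Set G), ← h, mul_assoc, coe_mul_coe, ← mul_assoc,
        coe_mul_coe]
    exact hmul ▸ Set.mul_mem_mul hx hy
  | inv x _ hx =>
    have hinv : ((A : Set G) * B)⁻¹ = A * B := by
      rw [mul_inv_rev, inv_coe_set, inv_coe_set, h]
    exact hinv ▸ Set.inv_mem_inv.mpr hx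

theorem card_image_mk_eq_relIndex (A B : Subgroup G) :
    Nat.card (((↑) : G → G ⧸ B) '' A) = B.relIndex A := by
  have hsmul (a : A) : a • ((1 : G) : G ⧸ B) = ((a : G) : G ⧸ B) := by
    show ((a : G) • ((1 : G) : G ⧸ B)) = _
    rw [MulAction.Quotient.smul_mk, smul_eq_mul, mul_one]
  have horbit : ((↑) : G → G ⧸ B) '' A = MulAction.orbit A ((1 : G) : G ⧸ B) := by
    ext x
    simp [MulAction.mem_orbit_iff, hsmul]
  have hstab : MulAction.stabilizer A ((1 : G) : G ⧸ B) = B.subgroupOf A := by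
    ext a
    rw [MulAction.mem_stabilizer_iff, hsmul, mem_subgroupOf, eq_comm, QuotientGroup.eq, inv_one,
      one_mul]
  rw [horbit, relIndex, ← hstab, MulAction.index_stabilizer, Nat.card_coe_set_eq]

theorem card_mul_eq_card_mul_relIndex (A B : Subgroup G) :
    Nat.card ((A : Set G) * B : Set G) = Nat.card B * B.relIndex A := by
  rw [card_mul_eq_card_subgroup_mul_card_quotient, card_image_mk_eq_relIndex]

theorem card_mul_relIndex {H K : Subgroup G} (h : H ≤ K) :
    Nat.card H * H.relIndex K = Nat.card K := by
  simpa only [relIndex_bot_left] using relIndex_mul_relIndex ⊥ H K bot_le h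

theorem relIndex_sup_of_mul_comm [Finite G] {A B : Subgroup G} (h : (A : Set G) * B = B * A) :
    B.relIndex (A ⊔ B) = B.relIndex A := by
  apply Nat.eq_of_mul_eq_mul_left (Nat.card_pos (α := B))
  rw [card_mul_relIndex le_sup_right, ← card_mul_eq_card_mul_relIndex, ← coe_sup_of_mul_comm h]
  rfl

theorem mul_inf_comm_of_mul_comm {H S T : Subgroup G} (hHT : H ≤ T)
    (h : (H : Set G) * S = S * H) :
    (H : Set G) * ↑(S ⊓ T) = ↑(S ⊓ T) * H := by
  rw [mul_inf_assoc H S T hHT, inf_comm, inf_mul_assoc T S H hHT, h, Set.inter_comm]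

theorem le_of_mul_comm_of_coprime [Finite G] {H K R : Subgroup G} (hHK : H ≤ K) (hRK : R ≤ K)
    (hRH : (R : Set G) * H = H * R) (hcop : (H.relIndex K).Coprime (Nat.card R)) : R ≤ H := by
  have hdvdK : H.relIndex (R ⊔ H) ∣ H.relIndex K :=
    Dvd.intro _ (relIndex_mul_relIndex H _ K le_sup_right (sup_le hRK hHK))
  have hdvdR : H.relIndex (R ⊔ H) ∣ Nat.card R :=
    relIndex_sup_of_mul_comm hRH ▸ relIndex_dvd_card H R
  have hone := Nat.eq_one_of_dvd_coprimes hcop hdvdK hdvdR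
  exact le_sup_left.trans (relIndex_eq_one.mp hone)

theorem coe_mul_eq_of_coprime_relIndex [Finite G] {D Q V : Subgroup G} (hDV : D ≤ V)
    (hQV : Q ≤ V) (hcop : (D.relIndex V).Coprime (Q.relIndex V)) : (Q : Set G) * D = V := by
  -- both sides equal `(D ⊓ Q).relIndex V`
  have hcomm : D.relIndex Q * Q.relIndex V = Q.relIndex D * D.relIndex V := by
    have hDQ := relIndex_inf_mul_relIndex D Q V
    have hQD := relIndex_inf_mul_relIndex Q D V
    rw [inf_of_le_left hQV] at hDQ
    rw [inf_of_le_left hDV, inf_comm] at hQD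
    rw [hDQ, hQD]
  have hdvd : D.relIndex V ∣ D.relIndex Q :=
    hcop.dvd_of_dvd_mul_right (Dvd.intro_left _ hcomm.symm)
  have hle : D.relIndex Q ≤ D.relIndex V :=
    relIndex_le_of_le_right hQV (D.subgroupOf V).index_ne_zero_of_finite
  have heq : D.relIndex Q = D.relIndex V :=
    hle.antisymm (Nat.le_of_dvd (Nat.pos_of_ne_zero (D.subgroupOf Q).index_ne_zero_of_finite) hdvd)
  have hsub : (Q : Set G) * D ⊆ V :=
    Set.mul_subset_iff.mpr fun q hq d hd => V.mul_mem (hQV hq) (hDV hd)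
  refine Set.eq_of_subset_of_ncard_le hsub ?_ (Set.toFinite _)
  rw [← Nat.card_coe_set_eq, ← Nat.card_coe_set_eq, card_mul_eq_card_mul_relIndex, heq,
    card_mul_relIndex hDV]
  rfl

theorem not_dvd_relIndex_of_sylow_le [Finite G] {r : ℕ} [Fact r.Prime] {D V : Subgroup G}
    (S : Sylow r V) (hS : (S : Subgroup V) ≤ D.subgroupOf V) : ¬ r ∣ D.relIndex V :=
  fun h => S.not_dvd_index (h.trans (index_dvd_of_le hS))

theorem mul_comm_of_coe_mul_eq {A B C : Subgroup G} (h : (A : Set G) * B = C) :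
    (B : Set G) * A = A * B :=
  calc (B : Set G) * A = ((A : Set G) * B)⁻¹ := by rw [mul_inv_rev, inv_coe_set, inv_coe_set]
    _ = A * B := by rw [h, inv_coe_set]

theorem mul_comm_iff_map_subtype {U : Subgroup G} {A B : Subgroup U} :
    (A : Set U) * B = B * A ↔
      ((A.map U.subtype : Subgroup G) : Set G) * (B.map U.subtype) =
        (B.map U.subtype : Subgroup G) * (A.map U.subtype) := by
  simp only [coe_map, ← Set.image_mul]
  exact (Set.image_injective.mpr U.subtype_injective).eq_iff.symm

end Subgroup

open Subgroup

theorem SQuasinormal.le_of_isPGroup_of_le_sup {G : Type*} [Group G] [Finite G] {H : Subgroup G}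
    (hH : SQuasinormal G H) {p q : ℕ} [hp : Fact p.Prime] [hq : Fact q.Prime] (hqp : q ≠ p)
    (P : Sylow p G) {R : Subgroup G} (hR : IsPGroup q R) (hRT : R ≤ (P : Subgroup G) ⊔ H) :
    R ≤ H := by
  obtain ⟨S, hRS⟩ := hR.exists_le_sylow
  have hSH :=
    mul_inf_comm_of_mul_comm (le_sup_right : H ≤ (P : Subgroup G) ⊔ H) (hH q hq.out S)
  obtain ⟨a, ha⟩ := IsPGroup.iff_card.mp P.isPGroup'
  obtain ⟨b, hb⟩ := IsPGroup.iff_card.mp (S.isPGroup'.to_inf_left (K := P ⊔ H))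
  have hindex : H.relIndex (P ⊔ H) ∣ p ^ a :=
    ha ▸ relIndex_sup_of_mul_comm (hH p hp.out P).symm ▸ relIndex_dvd_card H P
  have hcop : (H.relIndex (P ⊔ H)).Coprime (Nat.card (S ⊓ (P ⊔ H) : Subgroup G)) :=
    hb ▸ (Nat.coprime_pow_primes a b hp.out hq.out hqp.symm).coprime_dvd_left hindex
  exact (le_inf hRS hRT).trans (le_of_mul_comm_of_coprime le_sup_right inf_le_right hSH.symm hcop)

theorem SQuasinormal.not_dvd_relIndex_inf {G : Type*} [Group G] [Finite G] {H : Subgroup G}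
    (hH : SQuasinormal G H) {p r : ℕ} [Fact p.Prime] [Fact r.Prime] (hrp : r ≠ p)
    (P : Sylow p G) (U : Subgroup G) : ¬ r ∣ (H ⊓ U).relIndex (U ⊓ ((P : Subgroup G) ⊔ H)) := by
  obtain ⟨S⟩ : Nonempty (Sylow r ↥(U ⊓ ((P : Subgroup G) ⊔ H))) := inferInstance
  refine not_dvd_relIndex_of_sylow_le S fun x hx => mem_subgroupOf.mpr (mem_inf.mpr ⟨?_, x.2.1⟩)
  exact hH.le_of_isPGroup_of_le_sup hrp P (S.isPGroup'.map _)
    ((map_subtype_le _).trans inf_le_right) (mem_map_of_mem _ hx)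

/-- If `H` is S-quasinormal in a finite group `G` and `U ≤ G`, then `H ∩ U` is
S-quasinormal in `U`. -/
theorem sQuasinormal_inf {G : Type*} [Group G] [Finite G] (H U : Subgroup G)
    (hH : SQuasinormal G H) : SQuasinormal U (H.subgroupOf U) := by
  intro p hp P'
  have := Fact.mk hp
  set Q := (P' : Subgroup U).map U.subtype
  obtain ⟨P, hQP⟩ := (P'.isPGroup'.map U.subtype).exists_le_sylow
  set V := U ⊓ ((P : Subgroup G) ⊔ H)
  have hDV : H ⊓ U ≤ V := le_inf inf_le_right (inf_le_left.trans le_sup_right)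
  have hQV : Q ≤ V := le_inf (map_subtype_le _) (hQP.trans le_sup_left)
  have hQ : ¬ p ∣ Q.relIndex V := fun h =>
    not_dvd_relIndex_of_sylow_le (D := Q) P' (fun _ hx => mem_subgroupOf.mpr (mem_map_of_mem _ hx))
      (h.trans (Dvd.intro _ (relIndex_mul_relIndex Q V U hQV inf_le_left)))
  have hcop : ((H ⊓ U).relIndex V).Coprime (Q.relIndex V) :=
    Nat.coprime_of_dvd fun r hr hrD => by
      have := Fact.mk hr
      obtain rfl | hrp := eq_or_ne r p
      · exact hQ
      · exact (hH.not_dvd_relIndex_inf hrp P U hrD).elim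
  rw [mul_comm_iff_map_subtype, subgroupOf_map_subtype]
  exact mul_comm_of_coe_mul_eq (coe_mul_eq_of_coprime_relIndex hDV hQV hcop)
end

section
/- If H is a τ-quasinormal subgroup of a finite group G and U is a subgroup of G containing H, then H is τ-quasinormal in U. -/
/-!
Extend a Sylow `q`-subgroup `Q` of `U` to a Sylow `q`-subgroup `Q₁` of `G` with `Q₁ ∩ U = Q`.
Since `Q^U` embeds in `Q₁^G`, the gcd condition for `Q` in `U` implies the one for `Q₁` in `G`,
so `H Q₁ = Q₁ H`. Dedekind's modular law then gives `H Q = H Q₁ ∩ U = Q₁ H ∩ U = Q H`.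
-/

open scoped Pointwise

/-- `H` is τ-quasinormal in `G` if it permutes with every Sylow `q`-subgroup `Q` of `G`
such that `q ∤ |H|` and `gcd(|H|, |Q^G|) ≠ 1`. -/
def TauQuasinormal (G : Type*) [Group G] (H : Subgroup G) : Prop :=
  ∀ (q : ℕ), q.Prime → ∀ Q : Sylow q G,
    ¬ q ∣ Nat.card H →
    Nat.gcd (Nat.card H) (Nat.card (Subgroup.normalClosure ((Q : Subgroup G) : Set G))) ≠ 1 →
    (H : Set G) * ((Q : Subgroup G) : Set G) = ((Q : Subgroup G) : Set G) * (H : Set G)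

namespace Subgroup

variable {G : Type*} [Group G]

theorem card_normalClosure_dvd_of_injective {N : Type*} [Group N] {f : G →* N}
    (hf : Function.Injective f) {s : Set G} {t : Set N} (hst : f '' s ⊆ t) :
    Nat.card (normalClosure s) ∣ Nat.card (normalClosure t) := by
  rw [← card_map_of_injective hf]
  exact card_dvd_of_le ((map_normalClosure_le s f).trans (normalClosure_mono hst))

theorem card_subgroupOf_of_le {H U : Subgroup G} (hHU : H ≤ U) :
    Nat.card (H.subgroupOf U) = Nat.card H :=
  Nat.card_congr (subgroupOfEquivOfLe hHU).toEquiv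

theorem coe_map_subtype_subgroupOf_of_le {H U : Subgroup G} (hHU : H ≤ U) :
    U.subtype '' (H.subgroupOf U : Set U) = H := by
  rw [← coe_map, subgroupOf_map_subtype, inf_eq_left.mpr hHU]

theorem subgroupOf_mul_comm {H K U : Subgroup G} (hHU : H ≤ U)
    (hHK : (H : Set G) * K = K * H) :
    (H.subgroupOf U : Set U) * K.subgroupOf U = K.subgroupOf U * H.subgroupOf U := by
  apply Set.image_injective.mpr U.subtype_injective
  simp only [Set.image_mul, coe_map_subtype_subgroupOf_of_le hHU]
  rw [← coe_map, subgroupOf_map_subtype, mul_inf_assoc H K U hHU, hHK, inf_comm,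
    inf_mul_assoc U K H hHU, Set.inter_comm]

end Subgroup

theorem tauQuasinormal_of_le_general {G : Type*} [Group G] (H U : Subgroup G)
    (hHU : H ≤ U) (hH : TauQuasinormal G H) : TauQuasinormal U (H.subgroupOf U) := by
  intro q hq Q hqH hgcd
  rw [Subgroup.card_subgroupOf_of_le hHU] at hqH hgcd
  obtain ⟨Q₁, hQ₁⟩ := Q.exists_comap_subtype_eq
  rw [← hQ₁] at hgcd ⊢
  have hdvd : Nat.card (Subgroup.normalClosure ((Q₁.comap U.subtype : Subgroup U) : Set U)) ∣
      Nat.card (Subgroup.normalClosure ((Q₁ : Subgroup G) : Set G)) :=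
    Subgroup.card_normalClosure_dvd_of_injective U.subtype_injective (Set.image_preimage_subset _ _)
  have hgcd₁ : Nat.gcd (Nat.card H)
      (Nat.card (Subgroup.normalClosure ((Q₁ : Subgroup G) : Set G))) ≠ 1 :=
    fun h ↦ hgcd (Nat.Coprime.coprime_dvd_right hdvd h)
  exact Subgroup.subgroupOf_mul_comm hHU (hH q hq Q₁ hqH hgcd₁)

/-- If `H` is τ-quasinormal in a finite group `G` and `H ≤ U ≤ G`, then `H` is
τ-quasinormal in `U`. -/
theorem tauQuasinormal_of_le {G : Type*} [Group G] [Finite G] (H U : Subgroup G)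
    (hHU : H ≤ U) (hH : TauQuasinormal G H) : TauQuasinormal U (H.subgroupOf U) :=
  tauQuasinormal_of_le_general H U hHU hH
end

section
/- Let H be a τ-quasinormal subgroup of a finite group G and N a normal subgroup of G with gcd(|H|, |N|) = 1. Then HN/N is τ-quasinormal in G/N. -/
open scoped Pointwise

namespace Subgroup

variable {G G' : Type*} [Group G] [Group G']

theorem card_map_of_disjoint_ker {H : Subgroup G} {f : G →* G'} (h : Disjoint H f.ker) :
    Nat.card (H.map f) = Nat.card H :=
  Nat.card_image_of_injOn <| (Set.injOn_iff_map_eq_one f H).2 fun _ ha ha' =>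
    disjoint_def.1 h ha ha'

theorem card_map_mk'_of_coprime {H N : Subgroup G} [N.Normal]
    (hco : Nat.Coprime (Nat.card H) (Nat.card N)) :
    Nat.card (H.map (QuotientGroup.mk' N)) = Nat.card H :=
  card_map_of_disjoint_ker <| by
    rw [QuotientGroup.ker_mk']
    exact disjoint_of_coprime_natCard hco

theorem card_normalClosure_image_dvd {f : G →* G'} (hf : Function.Surjective f) (s : Set G) :
    Nat.card (normalClosure (f '' s)) ∣ Nat.card (normalClosure s) := by
  rw [← map_normalClosure s f hf]
  exact card_dvd_of_surjective _ (f.subgroupMap_surjective _)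

theorem map_mul_map_comm {H K : Subgroup G} (f : G →* G') (h : (H : Set G) * K = K * H) :
    (H.map f : Set G') * K.map f = (K.map f : Set G') * H.map f := by
  simp only [coe_map, ← Set.image_mul, h]

end Subgroup

/-- If `H` is τ-quasinormal in a finite group `G` and `N ⊴ G` with `gcd(|H|,|N|) = 1`,
then `HN/N` is τ-quasinormal in `G/N`. -/
theorem tauQuasinormal_quotient_coprime {G : Type*} [Group G] [Finite G] (H N : Subgroup G)
    [N.Normal] (hco : Nat.Coprime (Nat.card H) (Nat.card N)) (hH : TauQuasinormal G H) :
    TauQuasinormal (G ⧸ N) (H.map (QuotientGroup.mk' N)) := by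
  intro q hq Q hqH hgcd
  have : Fact q.Prime := ⟨hq⟩
  obtain ⟨P, rfl⟩ := Sylow.mapSurjective_surjective (QuotientGroup.mk'_surjective N) q Q
  rw [Subgroup.card_map_mk'_of_coprime hco] at hqH hgcd
  rw [Sylow.coe_mapSurjective] at hgcd ⊢
  rw [Subgroup.coe_map] at hgcd
  refine Subgroup.map_mul_map_comm _ (hH q hq P hqH fun hcop => hgcd ?_)
  exact Nat.Coprime.coprime_dvd_right
    (Subgroup.card_normalClosure_image_dvd (QuotientGroup.mk'_surjective N) _) hcop
end

section
/- Let H be a τ-quasinormal subgroup of a finite group G and N a normal subgroup of G such that the set of prime divisors of |HN/N| equals the set of prime divisors of |H|. Then HN/N is τ-quasinormal in G/N. -/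
open scoped Pointwise

/-! The image of a Sylow `q`-subgroup of `G` under the surjection `G → G/N` is again Sylow, and
every Sylow subgroup of `G/N` arises this way. Since `π(HN/N) = π(H)`, the conditions `q ∤ |HN/N|`
and `gcd(|HN/N|, |(QN/N)^{G/N}|) ≠ 1` lift to `q ∤ |H|` and `gcd(|H|, |Q^G|) ≠ 1`, because
`(QN/N)^{G/N}` is the image of `Q^G`. So `H` permutes with `Q`, and taking images, `HN/N`
permutes with `QN/N`. -/

lemma Nat.Coprime.of_primeFactors_subset {a a' b : ℕ} (h : a'.primeFactors ⊆ a.primeFactors)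
    (ha' : a' ≠ 0) (hab : a.Coprime b) : a'.Coprime b :=
  Nat.coprime_of_dvd fun k hk hka' hkb =>
    have hka : k ∣ a := Nat.dvd_of_mem_primeFactors (h (hk.mem_primeFactors hka' ha'))
    hk.one_lt.ne' (Nat.eq_one_of_dvd_coprimes hab hka hkb)

lemma Subgroup.map_mul_comm_of_mul_comm {G K : Type*} [Group G] [Group K] (f : G →* K)
    {H Q : Subgroup G} (h : (H : Set G) * Q = Q * H) :
    ((H.map f : Subgroup K) : Set K) * (Q.map f : Subgroup K) =
      (Q.map f : Subgroup K) * H.map f := by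
  simp only [Subgroup.coe_map, ← Set.image_mul, h]

theorem TauQuasinormal.map_of_surjective {G K : Type*} [Group G] [Finite G] [Group K]
    {H : Subgroup G} (hH : TauQuasinormal G H) (f : G →* K) (hf : Function.Surjective f)
    (hpi : (Nat.card (H.map f)).primeFactors = (Nat.card H).primeFactors) :
    TauQuasinormal K (H.map f) := by
  intro q hq Q' hqH' hgcd'
  have : Fact q.Prime := ⟨hq⟩
  have : Finite K := Finite.of_surjective f hf
  obtain ⟨Q, rfl⟩ := Sylow.mapSurjective_surjective hf q Q'
  rw [Sylow.coe_mapSurjective] at hgcd' ⊢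
  have hqH : ¬ q ∣ Nat.card H := fun hdvd =>
    hqH' (Nat.dvd_of_mem_primeFactors (hpi ▸ hq.mem_primeFactors hdvd Nat.card_pos.ne'))
  have hgcd : ¬ (Nat.card H).Coprime (Nat.card (Subgroup.normalClosure (Q : Set G))) := by
    intro hcop
    refine hgcd' ?_
    rw [Subgroup.coe_map, ← Subgroup.map_normalClosure _ _ hf]
    exact (hcop.of_primeFactors_subset hpi.le Nat.card_pos.ne').coprime_dvd_right
      (Subgroup.card_map_dvd _ f)
  exact Subgroup.map_mul_comm_of_mul_comm f (hH q hq Q hqH hgcd)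

/-- If `H` is τ-quasinormal in a finite group `G` and `N ⊴ G` with
`π(HN/N) = π(H)`, then `HN/N` is τ-quasinormal in `G/N`. -/
theorem tauQuasinormal_quotient_pi {G : Type*} [Group G] [Finite G] (H N : Subgroup G)
    [N.Normal]
    (hpi : (Nat.card (H.map (QuotientGroup.mk' N))).primeFactors = (Nat.card H).primeFactors)
    (hH : TauQuasinormal G H) :
    TauQuasinormal (G ⧸ N) (H.map (QuotientGroup.mk' N)) :=
  hH.map_of_surjective _ (QuotientGroup.mk'_surjective N) hpi
end

section
/- Let H be a weakly τ-embedded subgroup of a finite group G and let U be a subgroup of G with H ≤ U. Then H is weakly τ-embedded in U. -/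
open scoped Pointwise

/-- `H_{τG}`: the subgroup generated by all subgroups of `H` that are τ-quasinormal in `G`. -/
def tauCore (G : Type*) [Group G] (H : Subgroup G) : Subgroup G :=
  ⨆ (L : Subgroup G) (_ : L ≤ H) (_ : TauQuasinormal G L), L

/-- `H` is weakly τ-embedded in `G` if there is a normal subgroup `K` with `HK`
S-quasinormal in `G` and `H ∩ K ≤ H_{τG}`. (Since `K` is normal, `HK = H ⊔ K`.) -/
def WeaklyTauEmbedded (G : Type*) [Group G] (H : Subgroup G) : Prop :=
  ∃ K : Subgroup G, K.Normal ∧ SQuasinormal G (H ⊔ K) ∧ H ⊓ K ≤ tauCore G H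

/-!
Take `K ∩ U` as the normal subgroup of `U`. Every Sylow `p`-subgroup `Q` of `U` is `P ∩ U` for a
Sylow `p`-subgroup `P` of `G`, and then `(K ∩ U)Q = KP ∩ U`: the index of `K ∩ U` in `KP ∩ U`
divides `|KP : K|`, a power of `p`, while `|U : Q|` is prime to `p`. Since `HK` permutes with `P`,
`H` permutes with `KP`, and as `H ≤ U`, Dedekind's rule carries this down to `H` permuting with
`KP ∩ U` in `U`, i.e. `H(K ∩ U)` permutes with `Q`. For the second condition, a subgroup `L ≤ U`
that is τ-quasinormal in `G` is τ-quasinormal in `U`, because `Q^U ≤ P^G`, so the gcd condition in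
`U` implies the one in `G`.
-/

def PermutesWith {G : Type*} [Group G] (A B : Subgroup G) : Prop :=
  (A : Set G) * B = (B : Set G) * A

namespace PermutesWith

variable {G : Type*} [Group G]

theorem sup_normal_iff {H K L : Subgroup G} [K.Normal] :
    PermutesWith (H ⊔ K) L ↔ PermutesWith H (K ⊔ L) := by
  have hLK : (L : Set G) * K = (K : Set G) * L := by
    rw [← Subgroup.mul_normal, sup_comm, Subgroup.normal_mul]
  have hleft : ((H ⊔ K : Subgroup G) : Set G) * L = H * (K ⊔ L : Subgroup G) := by
    rw [Subgroup.mul_normal, Subgroup.normal_mul, mul_assoc]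
  have hright : (L : Set G) * (H ⊔ K : Subgroup G) = ((K ⊔ L : Subgroup G) : Set G) * H := by
    rw [sup_comm H, Subgroup.normal_mul, Subgroup.normal_mul, ← mul_assoc, hLK]
  rw [PermutesWith, PermutesWith, hleft, hright]

theorem subgroupOf {A B U : Subgroup G} (hAU : A ≤ U) (h : PermutesWith A B) :
    PermutesWith (A.subgroupOf U) (B.subgroupOf U) := by
  apply Set.image_injective.mpr U.subtype_injective
  rw [Set.image_mul, Set.image_mul, ← Subgroup.coe_map, ← Subgroup.coe_map,
    Subgroup.subgroupOf_map_subtype, Subgroup.subgroupOf_map_subtype, inf_eq_left.mpr hAU,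
    Subgroup.mul_inf_assoc A B U hAU, inf_comm, Subgroup.inf_mul_assoc U B A hAU, h,
    Set.inter_comm]

end PermutesWith

namespace Subgroup

variable {G : Type*} [Group G]

theorem relIndex_dvd_relIndex_of_le_sup {N K L : Subgroup G} [N.Normal] (h : K ≤ N ⊔ L) :
    N.relIndex K ∣ N.relIndex L := by
  rw [← relIndex_sup_right K N, ← relIndex_sup_right L N]
  exact Dvd.intro _ (relIndex_mul_relIndex N (K ⊔ N) (L ⊔ N) le_sup_right
    (sup_le (h.trans (sup_comm N L).le) le_sup_right))

theorem sup_eq_of_relIndex_dvd_prime_pow {M Q W : Subgroup G} {p n : ℕ} (hp : p.Prime)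
    (hle : M ⊔ Q ≤ W) (hM : M.relIndex W ∣ p ^ n) (hQ : ¬ p ∣ Q.index) : M ⊔ Q = W := by
  have hdvd_pow : (M ⊔ Q).relIndex W ∣ p ^ n := (relIndex_dvd_of_le_left W le_sup_left).trans hM
  have hdvd_index : (M ⊔ Q).relIndex W ∣ Q.index :=
    (relIndex_dvd_of_le_left W le_sup_right).trans
      (relIndex_dvd_index_of_le (le_sup_right.trans hle))
  have hcop : Nat.Coprime (p ^ n) Q.index := ((Nat.Prime.coprime_iff_not_dvd hp).2 hQ).pow_left n
  exact le_antisymm hle (relIndex_eq_one.mp (Nat.eq_one_of_dvd_coprimes hcop hdvd_pow hdvd_index))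

theorem subgroupOf_sup_sylow_eq [Finite G] {p : ℕ} [Fact p.Prime] (N U : Subgroup G) [N.Normal]
    (P : Sylow p G) (Q : Sylow p U) (hPQ : (P : Subgroup G).subgroupOf U = Q) :
    N.subgroupOf U ⊔ (Q : Subgroup U) = (N ⊔ P).subgroupOf U := by
  obtain ⟨n, hn⟩ := P.2.exists_card_eq
  refine sup_eq_of_relIndex_dvd_prime_pow (n := n) Fact.out
    (sup_le (comap_mono le_sup_left) (hPQ ▸ comap_mono le_sup_right)) ?_ Q.not_dvd_index
  calc (N.subgroupOf U).relIndex ((N ⊔ P).subgroupOf U)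
      = N.relIndex ((N ⊔ P) ⊓ U) := by
        rw [subgroupOf, relIndex_comap, subgroupOf_map_subtype]
    _ ∣ N.relIndex P := relIndex_dvd_relIndex_of_le_sup inf_le_left
    _ ∣ p ^ n := hn ▸ inf_relIndex_right N P ▸ relIndex_dvd_card _ _

theorem card_normalClosure_preimage_subtype_dvd (U : Subgroup G) (s : Set G) :
    Nat.card (normalClosure (U.subtype ⁻¹' s)) ∣ Nat.card (normalClosure s) := by
  have hle : normalClosure (U.subtype ⁻¹' s) ≤ (normalClosure s).subgroupOf U :=
    normalClosure_le_normal fun x hx => mem_subgroupOf.mpr (subset_normalClosure hx)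
  exact (card_dvd_of_le hle).trans (card_comap_dvd_of_injective _ _ U.subtype_injective)

end Subgroup

open Subgroup

section TauCore

variable {G : Type*} [Group G]

theorem le_tauCore {L H : Subgroup G} (hLH : L ≤ H) (hL : TauQuasinormal G L) :
    L ≤ tauCore G H :=
  le_iSup_of_le L (le_iSup_of_le hLH (le_iSup_of_le hL le_rfl))

theorem TauQuasinormal.subgroupOf {L U : Subgroup G} (hLU : L ≤ U)
    (h : TauQuasinormal G L) : TauQuasinormal U (L.subgroupOf U) := by
  intro q hq Q hq_ndvd hgcd
  obtain ⟨P, hPQ⟩ := Q.exists_comap_subtype_eq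
  have hcard : Nat.card (L.subgroupOf U) = Nat.card L :=
    Nat.card_congr (subgroupOfEquivOfLe hLU).toEquiv
  rw [hcard] at hq_ndvd hgcd
  have hgcd_P : Nat.gcd (Nat.card L) (Nat.card (normalClosure ((P : Subgroup G) : Set G))) ≠ 1 :=
    fun h1 => hgcd (Nat.dvd_one.mp (h1 ▸ Nat.gcd_dvd_gcd_of_dvd_right _
      (hPQ ▸ card_normalClosure_preimage_subtype_dvd U _)))
  exact hPQ ▸ PermutesWith.subgroupOf hLU (h q hq P hq_ndvd hgcd_P)

theorem subgroupOf_tauCore_le {H U : Subgroup G} (hHU : H ≤ U) :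
    (tauCore G H).subgroupOf U ≤ tauCore U (H.subgroupOf U) := by
  suffices tauCore G H ≤ (tauCore U (H.subgroupOf U)).map U.subtype by
    exact (comap_mono this).trans_eq (comap_map_eq_self_of_injective U.subtype_injective _)
  refine iSup_le fun L => iSup_le fun hLH => iSup_le fun hL => ?_
  have hLU : L ≤ U := hLH.trans hHU
  calc L = (L.subgroupOf U).map U.subtype := by rw [subgroupOf_map_subtype, inf_eq_left.mpr hLU]
    _ ≤ _ := map_mono (le_tauCore (comap_mono hLH) (hL.subgroupOf hLU))

end TauCore

/-- If `H` is weakly τ-embedded in a finite group `G` and `H ≤ U ≤ G`, then `H` is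
weakly τ-embedded in `U`. -/
theorem weaklyTauEmbedded_of_le {G : Type*} [Group G] [Finite G] (H U : Subgroup G)
    (hHU : H ≤ U) (hH : WeaklyTauEmbedded G H) :
    WeaklyTauEmbedded U (H.subgroupOf U) := by
  obtain ⟨K, hK, hSQ, hcore⟩ := hH
  refine ⟨K.subgroupOf U, hK.subgroupOf U, fun p hp Q => ?_, ?_⟩
  · have := Fact.mk hp
    obtain ⟨P, hPQ⟩ := Q.exists_comap_subtype_eq
    have hHKP : PermutesWith H (K ⊔ P) := PermutesWith.sup_normal_iff.mp (hSQ p hp P)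
    show PermutesWith _ _
    rw [PermutesWith.sup_normal_iff, subgroupOf_sup_sylow_eq K U P Q hPQ]
    exact hHKP.subgroupOf hHU
  · calc H.subgroupOf U ⊓ K.subgroupOf U = (H ⊓ K).subgroupOf U := (comap_inf _ _ _).symm
      _ ≤ (tauCore G H).subgroupOf U := comap_mono hcore
      _ ≤ tauCore U (H.subgroupOf U) := subgroupOf_tauCore_le hHU
end

section
/- Let M be a maximal subgroup of a finite group G and P a normal p-subgroup of G such that G = PM, where p is a prime dividing |G|. Then P ∩ M is normal in G. -/
open scoped Pointwise

/-!
`P ⊄ M`, so `P ∩ M` is a proper subgroup of the nilpotent group `P` and hence properly contained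
in its normalizer in `P`. Since `P ⊴ G`, all of `M` normalizes `P ∩ M` as well, so the normalizer
of `P ∩ M` strictly contains the maximal subgroup `M` and is all of `G`.
-/

namespace Subgroup

variable {G : Type*} [Group G]

theorem le_normalizer_inf_left (N K : Subgroup G) [N.Normal] : K ≤ normalizer (N ⊓ K) :=
  (le_inf le_normalizer_of_normal K.le_normalizer).trans inf_normalizer_le_normalizer_inf

theorem lt_normalizer_inf_of_isNilpotent {H N : Subgroup G} [Group.IsNilpotent N] (hlt : H < N) :
    H < normalizer H ⊓ N := by
  have hH : H.subgroupOf N < ⊤ :=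
    lt_top_iff_ne_top.mpr fun h => hlt.not_ge (subgroupOf_eq_top.mp h)
  have key := Group.normalizerCondition_of_isNilpotent _ hH
  rwa [← subgroupOf_normalizer_eq hlt.le, ← map_lt_map_iff_of_injective N.subtype_injective,
    subgroupOf_map_subtype, subgroupOf_map_subtype, inf_of_le_left hlt.le] at key

theorem normal_inf_of_isCoatom {N M : Subgroup G} [N.Normal] [Group.IsNilpotent N]
    (hM : IsCoatom M) (hNM : ¬N ≤ M) : (N ⊓ M).Normal := by
  have hlt : N ⊓ M < normalizer (N ⊓ M) ⊓ N :=
    lt_normalizer_inf_of_isNilpotent (inf_lt_left.mpr hNM)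
  have hMlt : M < normalizer (N ⊓ M) := by
    refine (le_normalizer_inf_left N M).lt_of_ne fun h => ?_
    rw [← h, inf_comm] at hlt
    exact hlt.ne rfl
  exact normalizer_eq_top_iff.mp (hM.2 _ hMlt)

theorem not_le_of_mul_eq_univ {N M : Subgroup G} [N.Normal] (hM : M ≠ ⊤)
    (hNM : (N : Set G) * (M : Set G) = Set.univ) : ¬N ≤ M := by
  intro hle
  apply hM
  rw [← sup_eq_right.mpr hle, ← coe_eq_univ, normal_mul, hNM]

end Subgroup

theorem inf_normal_of_maximal_general {G : Type*} [Group G] [Finite G] (p : ℕ) (hp : p.Prime)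
    (P M : Subgroup G) [P.Normal] (hP : IsPGroup p P)
    (hM : IsCoatom M) (hPM : (P : Set G) * (M : Set G) = Set.univ) :
    (P ⊓ M).Normal := by
  have : Fact p.Prime := ⟨hp⟩
  have : Group.IsNilpotent P := hP.isNilpotent
  exact Subgroup.normal_inf_of_isCoatom hM (Subgroup.not_le_of_mul_eq_univ hM.1 hPM)

/-- If `M` is a maximal subgroup of a finite group `G`, `P ⊴ G` is a `p`-subgroup and
`G = PM`, then `P ∩ M ⊴ G`. -/
theorem inf_normal_of_maximal {G : Type*} [Group G] [Finite G] (p : ℕ) (hp : p.Prime)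
    (hdvd : p ∣ Nat.card G) (P M : Subgroup G) [P.Normal] (hP : IsPGroup p P)
    (hM : IsCoatom M) (hPM : (P : Set G) * (M : Set G) = Set.univ) :
    (P ⊓ M).Normal :=
  inf_normal_of_maximal_general p hp P M hP hM hPM
end

section
/- Let P be a p-subgroup of a finite group G with P ≤ O_p(G). If P is τ-quasinormal in G, then P is S-quasinormal in G; conversely, every S-quasinormal p-subgroup of G is contained in O_p(G) and is τ-quasinormal in G. -/
open scoped Pointwise

/-- `O_p(G)`: the largest normal `p`-subgroup of `G`. -/
def pCore' (p : ℕ) (G : Type*) [Group G] : Subgroup G :=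
  ⨆ (N : Subgroup G) (_ : N.Normal) (_ : IsPGroup p N), N

/-!
If `P ≤ O_p(G)`, then `P` lies in every Sylow `p`-subgroup and so permutes with it. For a Sylow
`q`-subgroup `Q` with `q ≠ p`, τ-quasinormality covers the case `gcd(|P|, |Q^G|) ≠ 1`; otherwise
`p ∤ |Q^G|`, so the normal subgroups `O_p(G)` and `Q^G` intersect trivially and hence commute
elementwise. Conversely, if `P` permutes with a Sylow `p`-subgroup `S`, then `PS` is a
`p`-subgroup containing `S`, so `P ≤ S`; thus `P` lies in the intersection of the Sylow
`p`-subgroups, which is `O_p(G)`.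
-/

open Subgroup

section

variable {G : Type*} [Group G]

theorem Subgroup.coe_sup_of_coe_mul_comm {H K : Subgroup G} (h : (H : Set G) * K = K * H) :
    ((H ⊔ K : Subgroup G) : Set G) = H * K := by
  have hmul : ((H : Set G) * K) * (H * K) = H * K := by
    rw [mul_assoc, ← mul_assoc (K : Set G), ← h, mul_assoc, coe_mul_coe, ← mul_assoc, coe_mul_coe]
  have hinv : ((H : Set G) * K)⁻¹ = H * K := by
    rw [mul_inv_rev, inv_coe_set, inv_coe_set, h]
  rw [sup_eq_closure_mul]
  refine Set.Subset.antisymm (fun x hx => ?_) subset_closure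
  induction hx using closure_induction'' with
  | mem x hx => exact hx
  | inv_mem x hx => rwa [← hinv, Set.inv_mem_inv]
  | one => exact ⟨1, H.one_mem, 1, K.one_mem, mul_one 1⟩
  | mul x y _ _ hx hy => exact hmul ▸ Set.mul_mem_mul hx hy

theorem QuotientGroup.image_mk_eq_orbit (H K : Subgroup G) :
    (H : Set G).image ((↑) : G → G ⧸ K) = MulAction.orbit H ((1 : G) : G ⧸ K) := by
  ext x
  constructor
  · rintro ⟨a, ha, rfl⟩
    exact ⟨⟨a, ha⟩, congrArg _ (mul_one a)⟩
  · rintro ⟨⟨a, ha⟩, rfl⟩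
    exact ⟨a, ha, congrArg _ (mul_one a).symm⟩

end

namespace IsPGroup

variable {p : ℕ} [hp : Fact p.Prime]

theorem coprime_card_of_not_dvd {H : Type*} [Group H] [Finite H] (hH : IsPGroup p H) {n : ℕ}
    (hn : ¬ p ∣ n) : Nat.Coprime (Nat.card H) n := by
  obtain ⟨k, hk⟩ := iff_card.mp hH
  rw [hk]
  exact Nat.Coprime.pow_left k (hp.out.coprime_iff_not_dvd.mpr hn)

variable {G : Type*} [Group G] [Finite G]

theorem sup_of_coe_mul_comm {H K : Subgroup G} (hH : IsPGroup p H) (hK : IsPGroup p K)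
    (h : (H : Set G) * K = K * H) : IsPGroup p (H ⊔ K : Subgroup G) := by
  obtain ⟨m, hm⟩ := iff_card.mp hK
  obtain ⟨n, hn⟩ := hH.card_orbit ((1 : G) : G ⧸ K)
  refine iff_card.mpr ⟨m + n, ?_⟩
  calc Nat.card (H ⊔ K : Subgroup G) = Nat.card ((H : Set G) * K : Set G) := by
        rw [← coe_sup_of_coe_mul_comm h]; rfl
    _ = Nat.card K * Nat.card ((H : Set G).image ((↑) : G → G ⧸ K)) :=
        card_mul_eq_card_subgroup_mul_card_quotient K H
    _ = p ^ (m + n) := by rw [QuotientGroup.image_mk_eq_orbit, hm, hn, pow_add]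

theorem le_sylow_of_coe_mul_comm {P : Subgroup G} (hP : IsPGroup p P) (S : Sylow p G)
    (h : (P : Set G) * (S : Subgroup G) = (S : Subgroup G) * P) : P ≤ S :=
  le_sup_left.trans (S.is_maximal' (hP.sup_of_coe_mul_comm S.isPGroup' h) le_sup_right).le

theorem le_centralizer_of_not_dvd_card {N M : Subgroup G} [N.Normal] [M.Normal]
    (hN : IsPGroup p N) (hM : ¬ p ∣ Nat.card M) : N ≤ centralizer M := fun x hx y hy =>
  commute_of_normal_of_disjoint M N ‹_› ‹_›
    (disjoint_of_coprime_natCard (hN.coprime_card_of_not_dvd hM)).symm y x hy hx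

/-- As `P ≠ 1`, coprimality forces `p ∤ |Q^G|`, so `N` centralizes `Q^G ⊇ Q`. -/
theorem coe_mul_comm_of_gcd_card_normalClosure_eq_one {N P Q : Subgroup G} [N.Normal]
    (hN : IsPGroup p N) (hPN : P ≤ N) (hP : P ≠ ⊥)
    (h : Nat.gcd (Nat.card P) (Nat.card (normalClosure (Q : Set G))) = 1) :
    (P : Set G) * Q = Q * P := by
  have hpP : p ∣ Nat.card P :=
    (hN.to_le hPN).card_eq_or_dvd.resolve_left fun h1 => hP (card_eq_one.mp h1)
  have hpQ : ¬ p ∣ Nat.card (normalClosure (Q : Set G)) := fun hdvd =>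
    hp.out.one_lt.ne' (Nat.eq_one_of_dvd_one (h ▸ Nat.dvd_gcd hpP hdvd))
  refine set_mul_normalizer_comm _ _ fun x hx => centralizer_le_normalizer _ ?_
  exact centralizer_le subset_normalClosure (hN.le_centralizer_of_not_dvd_card hpQ (hPN hx))

end IsPGroup

namespace Sylow

variable {p : ℕ} {G : Type*} [Group G]

theorem isPGroup_normalCore (S : Sylow p G) : IsPGroup p (S : Subgroup G).normalCore :=
  S.isPGroup'.to_le (S : Subgroup G).normalCore_le

theorem le_normalCore_iff (S : Sylow p G) {H : Subgroup G} :
    H ≤ (S : Subgroup G).normalCore ↔ ∀ T : Sylow p G, H ≤ T := by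
  refine ⟨fun h T => h.trans (S.isPGroup_normalCore.le_sylow_of_normal T), fun h a ha b => ?_⟩
  have := h (b⁻¹ • S) ha
  rw [coe_subgroup_smul, mem_pointwise_smul_iff_inv_smul_mem] at this
  simpa using this

end Sylow

theorem pCore'_eq_normalCore {p : ℕ} {G : Type*} [Group G]
    (S : Sylow p G) : pCore' p G = (S : Subgroup G).normalCore :=
  le_antisymm
    (iSup_le fun _ => iSup_le fun _ => iSup_le fun hN =>
      normal_le_normalCore.mpr (hN.le_sylow_of_normal S))
    (le_iSup_of_le _ <| le_iSup_of_le inferInstance <| le_iSup_of_le S.isPGroup_normalCore le_rfl)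

/-- A `p`-subgroup `P ≤ O_p(G)` is S-quasinormal iff it is τ-quasinormal; moreover every
S-quasinormal `p`-subgroup lies in `O_p(G)`. -/
theorem sQuasinormal_iff_tau_of_pSubgroup {G : Type*} [Group G] [Finite G] (p : ℕ)
    (hp : p.Prime) (P : Subgroup G) (hP : IsPGroup p P) :
    (P ≤ pCore' p G ∧ TauQuasinormal G P → SQuasinormal G P) ∧
      (SQuasinormal G P → P ≤ pCore' p G ∧ TauQuasinormal G P) := by
  have := Fact.mk hp
  obtain ⟨S⟩ := Sylow.nonempty (p := p) (G := G)
  rw [pCore'_eq_normalCore S]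
  refine ⟨fun ⟨hle, htau⟩ q hq Q => ?_, fun hS => ⟨S.le_normalCore_iff.mpr fun T =>
    hP.le_sylow_of_coe_mul_comm T (hS p hp T), fun q hq Q _ _ => hS q hq Q⟩⟩
  by_cases hPQ : P ≤ Q
  · exact set_mul_normalizer_comm _ _ (hPQ.trans le_normalizer)
  have hqp : q ≠ p := by
    rintro rfl
    exact hPQ (S.le_normalCore_iff.mp hle Q)
  have hqP : ¬ q ∣ Nat.card P := (hq.coprime_iff_not_dvd).mp
    (hP.coprime_card_of_not_dvd ((Nat.prime_dvd_prime_iff_eq hp hq).not.mpr hqp.symm)).symm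
  obtain hgcd | hgcd :=
    ne_or_eq (Nat.gcd (Nat.card P) (Nat.card (normalClosure ((Q : Subgroup G) : Set G)))) 1
  · exact htau q hq Q hqP hgcd
  · exact S.isPGroup_normalCore.coe_mul_comm_of_gcd_card_normalClosure_eq_one hle
      (fun hbot => hPQ (hbot ▸ bot_le)) hgcd
end
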